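/- Let U_1, …, U_L be unitaries on a Hilbert space V and let H_prop = Σ_{t=1}^L H_t with H_t = (1/2)(−U_t ⊗ |t⟩⟨t−1| − U_t† ⊗ |t−1⟩⟨t| + I ⊗ |t⟩⟨t| + I ⊗ |t−1⟩⟨t−1|) acting on V ⊗ ℂ^{L+1}. Then for every unit vector ξ ∈ V, the history state |ψ_hist⟩ = (L+1)^{−1/2} Σ_{t=0}^L (U_t ⋯ U_1 ξ) ⊗ |t⟩ satisfies H_prop |ψ_hist⟩ = 0, where U_0 ⋯ U_1 ξ means ξ for t = 0. -/

import Mathlib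

/-!
Each `H_t` acts only on clock states `t − 1` and `t`. In the history state the clock-`t`
component is `U_t` applied to the clock-`(t − 1)` component, so `U_t ⊗ |t⟩⟨t−1|` cancels
`I ⊗ |t⟩⟨t|`, and, because `U_t† U_t = 1`, `U_t† ⊗ |t−1⟩⟨t|` cancels `I ⊗ |t−1⟩⟨t−1|`.
Hence every `H_t` annihilates the history state separately.
-/

open Matrix Kronecker

variable {ι : Type*} [Fintype ι] [DecidableEq ι]

/-- The Feynman–Kitaev propagation term
`H_t = ½(−U_t ⊗ |t⟩⟨t−1| − U_t† ⊗ |t−1⟩⟨t| + I ⊗ |t⟩⟨t| + I ⊗ |t−1⟩⟨t−1|)`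
on `V ⊗ ℂ^{L+1}`, where `t = i.succ` and `t − 1 = i.castSucc` for `i : Fin L`. -/
noncomputable def FKterm (L : ℕ) (U : Matrix ι ι ℂ) (i : Fin L) :
    Matrix (ι × Fin (L + 1)) (ι × Fin (L + 1)) ℂ :=
  ((2 : ℂ)⁻¹) •
    (-(U ⊗ₖ Matrix.single i.succ i.castSucc (1 : ℂ))
      - (Uᴴ ⊗ₖ Matrix.single i.castSucc i.succ (1 : ℂ))
      + ((1 : Matrix ι ι ℂ) ⊗ₖ Matrix.single i.succ i.succ (1 : ℂ))
      + ((1 : Matrix ι ι ℂ) ⊗ₖ Matrix.single i.castSucc i.castSucc (1 : ℂ)))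

/-- The partial circuit output `U_t ⋯ U_1 ξ` (equal to `ξ` for `t = 0`). -/
noncomputable def partialOutput (L : ℕ) (U : Fin L → Matrix ι ι ℂ) (ξ : ι → ℂ) :
    ℕ → (ι → ℂ)
  | 0 => ξ
  | t + 1 =>
      if h : t < L then (U ⟨t, h⟩).mulVec (partialOutput L U ξ t)
      else partialOutput L U ξ t

theorem kronecker_single_one_mulVec_apply {R l m n : Type*} [CommSemiring R] [Fintype m]
    [Fintype n] [DecidableEq n] (A : Matrix l m R) (a b : n) (v : m × n → R) (x : l) (t : n) :
    ((A ⊗ₖ single a b (1 : R)) *ᵥ v) (x, t) = if t = a then (A *ᵥ fun y => v (y, b)) x else 0 := by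
  simp only [mulVec, dotProduct, Fintype.sum_prod_type, kroneckerMap_apply, single, of_apply]
  split_ifs with h
  · simp [h]
  · simp [Ne.symm h]

omit [DecidableEq ι] in
theorem partialOutput_succ {L : ℕ} (U : Fin L → Matrix ι ι ℂ) (ξ : ι → ℂ) (i : Fin L) :
    partialOutput L U ξ (i.succ : ℕ) = U i *ᵥ partialOutput L U ξ (i.castSucc : ℕ) := by
  simp [partialOutput, i.isLt]

theorem FKterm_mulVec_eq_zero {L : ℕ} {U : Matrix ι ι ℂ} (hU : Uᴴ * U = 1) (i : Fin L)
    (ψ : ι × Fin (L + 1) → ℂ)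
    (hψ : (fun y => ψ (y, i.succ)) = U *ᵥ fun y => ψ (y, i.castSucc)) :
    FKterm L U i *ᵥ ψ = 0 := by
  have hne : i.succ ≠ i.castSucc := (Fin.castSucc_lt_succ (i := i)).ne'
  have hback : (Uᴴ *ᵥ fun y => ψ (y, i.succ)) = fun y => ψ (y, i.castSucc) := by
    rw [hψ, mulVec_mulVec, hU, one_mulVec]
  funext ⟨x, t⟩
  simp only [FKterm, smul_mulVec, add_mulVec, sub_mulVec, neg_mulVec, Pi.smul_apply,
    Pi.add_apply, Pi.sub_apply, Pi.neg_apply, Pi.zero_apply, smul_eq_mul,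
    kronecker_single_one_mulVec_apply, one_mulVec]
  by_cases h₁ : t = i.succ
  · subst h₁
    simp [hne, congrFun hψ x]
  · by_cases h₂ : t = i.castSucc
    · subst h₂
      simp [hne.symm, congrFun hback x]
    · simp [h₁, h₂]

theorem history_state_in_kernel_general (L : ℕ) (U : Fin L → Matrix ι ι ℂ)
    (hU : ∀ i, (U i)ᴴ * U i = 1)
    (ξ : ι → ℂ) :
    (∑ i : Fin L, FKterm L (U i) i).mulVec
      (fun p : ι × Fin (L + 1) =>
        ((Real.sqrt (L + 1) : ℂ))⁻¹ * partialOutput L U ξ (p.2 : ℕ) p.1) = 0 := by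
  rw [sum_mulVec]
  refine Finset.sum_eq_zero fun i _ => FKterm_mulVec_eq_zero (hU i) i _ ?_
  change (_ : ℂ) • partialOutput L U ξ (i.succ : ℕ) =
    U i *ᵥ ((_ : ℂ) • partialOutput L U ξ (i.castSucc : ℕ))
  rw [partialOutput_succ, mulVec_smul]

/-- **The history state is annihilated by the propagation Hamiltonian**:
for unitaries `U_1, …, U_L` and any unit vector `ξ`, the history state
`|ψ_hist⟩ = (L+1)^{−1/2} Σ_{t=0}^L (U_t ⋯ U_1 ξ) ⊗ |t⟩` satisfies
`H_prop |ψ_hist⟩ = 0` where `H_prop = Σ_{t=1}^L H_t`. -/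
theorem history_state_in_kernel (L : ℕ) (U : Fin L → Matrix ι ι ℂ)
    (hU : ∀ i, (U i)ᴴ * U i = 1) (hU' : ∀ i, U i * (U i)ᴴ = 1)
    (ξ : ι → ℂ) (hξ : star ξ ⬝ᵥ ξ = 1) :
    (∑ i : Fin L, FKterm L (U i) i).mulVec
      (fun p : ι × Fin (L + 1) =>
        ((Real.sqrt (L + 1) : ℂ))⁻¹ * partialOutput L U ξ (p.2 : ℕ) p.1) = 0 :=
  history_state_in_kernel_general L U hU ξ
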